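/- Solving an M×N pictorial jigsaw puzzle is determined by its horizontal and vertical adjacency relations: for M, N ≥ 2, if two bijections from pieces to the M×N grid induce the same set of labeled edges, then they are equal (the edge set determines the bijection uniquely). -/
import Mathlib


/-- For M, N ≥ 2, a candidate solution (a bijection of pieces to grid positions) is
uniquely determined by its induced set of labeled edges: if two bijections induce
the same horizontal (L-R) and vertical (T-B) adjacency relations, they are equal. -/
theorem edge_set_determines_solution {V : Type*} (M N : ℕ)
    (hM : 2 ≤ M) (hN : 2 ≤ N)
    (σ τ : V ≃ Fin M × Fin N)
    (hLR : ∀ u v : V,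
      ((σ v).1 = (σ u).1 ∧ (σ v).2.val = (σ u).2.val + 1) ↔
      ((τ v).1 = (τ u).1 ∧ (τ v).2.val = (τ u).2.val + 1))
    (hTB : ∀ u v : V,
      ((σ v).2 = (σ u).2 ∧ (σ v).1.val = (σ u).1.val + 1) ↔
      ((τ v).2 = (τ u).2 ∧ (τ v).1.val = (τ u).1.val + 1)) :
    σ = τ := by
  have key : ∀ n : ℕ, ∀ u : V, (σ u).1.val + (σ u).2.val = n → σ u = τ u := by
    intro n
    induction n using Nat.strong_induction_on with
    | _ n ih =>
      intro u hu
      by_cases h2 : (σ u).2.val = 0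
      · by_cases h1 : (σ u).1.val = 0
        · -- corner piece: show τ u also has both coordinates 0
          have ht2 : (τ u).2.val = 0 := by
            by_contra ht
            set w := τ.symm ((τ u).1, ⟨(τ u).2.val - 1, lt_of_le_of_lt (Nat.sub_le _ _) (τ u).2.isLt⟩) with hw
            have hτw : τ w = ((τ u).1, ⟨(τ u).2.val - 1, _⟩) := τ.apply_symm_apply _
            have hedge : (τ u).1 = (τ w).1 ∧ (τ u).2.val = (τ w).2.val + 1 := by
              rw [hτw]; exact ⟨rfl, (Nat.succ_pred_eq_of_pos (Nat.pos_of_ne_zero ht)).symm⟩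
            have := ((hLR w u).mpr hedge).2
            omega
          have ht1 : (τ u).1.val = 0 := by
            by_contra ht
            set w := τ.symm (⟨(τ u).1.val - 1, lt_of_le_of_lt (Nat.sub_le _ _) (τ u).1.isLt⟩, (τ u).2) with hw
            have hτw : τ w = (⟨(τ u).1.val - 1, _⟩, (τ u).2) := τ.apply_symm_apply _
            have hedge : (τ u).2 = (τ w).2 ∧ (τ u).1.val = (τ w).1.val + 1 := by
              rw [hτw]; exact ⟨rfl, (Nat.succ_pred_eq_of_pos (Nat.pos_of_ne_zero ht)).symm⟩
            have := ((hTB w u).mpr hedge).2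
            omega
          ext
          · omega
          · omega
        · -- first coordinate positive, second = 0: use vertical predecessor
          set w := σ.symm (⟨(σ u).1.val - 1, lt_of_le_of_lt (Nat.sub_le _ _) (σ u).1.isLt⟩, (σ u).2) with hw
          have hσw : σ w = (⟨(σ u).1.val - 1, _⟩, (σ u).2) := σ.apply_symm_apply _
          have hedge : (σ u).2 = (σ w).2 ∧ (σ u).1.val = (σ w).1.val + 1 := by
            rw [hσw]; exact ⟨rfl, (Nat.succ_pred_eq_of_pos (Nat.pos_of_ne_zero h1)).symm⟩
          have hτedge := (hTB w u).mp hedge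
          have hih : σ w = τ w := by
            apply ih ((σ w).1.val + (σ w).2.val) _ w rfl
            have hc : (σ w).1.val = (σ u).1.val - 1 := by rw [hσw]
            have hd : (σ w).2.val = (σ u).2.val := by rw [hσw]
            omega
          have e1 : (τ u).1.val = (σ u).1.val := by
            have h := hτedge.2
            rw [← hih] at h
            have hs : (σ w).1.val = (σ u).1.val - 1 := by rw [hσw]
            omega
          have e2 : (τ u).2 = (σ u).2 := by
            rw [hτedge.1, ← hih, hσw]
          ext
          · omega
          · rw [e2]
      · -- second coordinate positive: use horizontal predecessor
        set w := σ.symm ((σ u).1, ⟨(σ u).2.val - 1, lt_of_le_of_lt (Nat.sub_le _ _) (σ u).2.isLt⟩) with hw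
        have hσw : σ w = ((σ u).1, ⟨(σ u).2.val - 1, _⟩) := σ.apply_symm_apply _
        have hedge : (σ u).1 = (σ w).1 ∧ (σ u).2.val = (σ w).2.val + 1 := by
          rw [hσw]; exact ⟨rfl, (Nat.succ_pred_eq_of_pos (Nat.pos_of_ne_zero h2)).symm⟩
        have hτedge := (hLR w u).mp hedge
        have hih : σ w = τ w := by
          apply ih ((σ w).1.val + (σ w).2.val) _ w rfl
          have hc : (σ w).1.val = (σ u).1.val := by rw [hσw]
          have hd : (σ w).2.val = (σ u).2.val - 1 := by rw [hσw]
          omega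
        have e2 : (τ u).2.val = (σ u).2.val := by
          have h := hτedge.2
          rw [← hih] at h
          have hs : (σ w).2.val = (σ u).2.val - 1 := by rw [hσw]
          omega
        have e1 : (τ u).1 = (σ u).1 := by
          rw [hτedge.1, ← hih, hσw]
        ext
        · rw [e1]
        · omega
  apply Equiv.ext
  intro u
  exact key _ u rfl
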